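/- arXiv:2306.14561 — 3 statements merged into one kernel-verified Lean document; each statement's English description precedes it below -/
import Mathlib

section
/- The matrices R + FᵀQF and I + FR^{-1}FᵀQ are invertible, and the identity QF(R + FᵀQF)^{-1}FᵀQ + Q(I + FR^{-1}FᵀQ)^{-1} = Q holds. (Woodbury-type identity used in the proof of Lemma 1.) -/
open Matrix

/-- Woodbury-type identity used in the proof of Lemma 1: for `Q ⪰ 0` symmetric and `R ≻ 0`,
the matrices `R + FᵀQF` and `I + FR⁻¹FᵀQ` are invertible, and
`QF(R + FᵀQF)⁻¹FᵀQ + Q(I + FR⁻¹FᵀQ)⁻¹ = Q`. -/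
theorem stmt3 (N M : ℕ) (hN : 0 < N) (hM : 0 < M)
    (Q : Matrix (Fin N) (Fin N) ℝ) (R : Matrix (Fin M) (Fin M) ℝ)
    (F : Matrix (Fin N) (Fin M) ℝ)
    (hQ : Q.PosSemidef) (hR : R.PosDef) :
    IsUnit (R + Fᵀ * Q * F) ∧
    IsUnit ((1 : Matrix (Fin N) (Fin N) ℝ) + F * R⁻¹ * Fᵀ * Q) ∧
    Q * F * (R + Fᵀ * Q * F)⁻¹ * Fᵀ * Q + Q * (1 + F * R⁻¹ * Fᵀ * Q)⁻¹ = Q := by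
  have hFT : Fᵀ = Fᴴ := (Matrix.conjTranspose_eq_transpose_of_trivial F).symm
  have hFQF : (Fᵀ * Q * F).PosSemidef := by
    rw [hFT]; exact hQ.conjTranspose_mul_mul_same F
  have hS : (R + Fᵀ * Q * F).PosDef := hR.add_posSemidef hFQF
  have hSdet : IsUnit (R + Fᵀ * Q * F).det := isUnit_iff_ne_zero.2 hS.det_pos.ne'
  have hRdet : IsUnit R.det := isUnit_iff_ne_zero.2 hR.det_pos.ne'
  have hRinv : R * R⁻¹ = 1 := Matrix.mul_nonsing_inv R hRdet
  have hRinv' : R⁻¹ * R = 1 := Matrix.nonsing_inv_mul R hRdet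
  set S := R + Fᵀ * Q * F with hSdef
  set T := (1 : Matrix (Fin N) (Fin N) ℝ) + F * R⁻¹ * Fᵀ * Q with hTdef
  have hTdet : IsUnit T.det := by
    have h1 : T = 1 + F * (R⁻¹ * Fᵀ * Q) := by rw [hTdef]; simp [Matrix.mul_assoc]
    have h2 : (1 : Matrix (Fin M) (Fin M) ℝ) + R⁻¹ * Fᵀ * Q * F = R⁻¹ * S := by
      rw [hSdef, Matrix.mul_add, hRinv']; simp [Matrix.mul_assoc]
    have h3 : T.det = ((1 : Matrix (Fin M) (Fin M) ℝ) + R⁻¹ * Fᵀ * Q * F).det := by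
      rw [h1, Matrix.det_one_add_mul_comm]
    rw [h3, h2, Matrix.det_mul]
    exact ((Matrix.isUnit_nonsing_inv_det R hRdet)).mul hSdet
  refine ⟨(Matrix.isUnit_iff_isUnit_det S).2 hSdet,
    (Matrix.isUnit_iff_isUnit_det T).2 hTdet, ?_⟩
  have hTinv : T⁻¹ * T = 1 := Matrix.nonsing_inv_mul T hTdet
  have hSinv : S⁻¹ * S = 1 := Matrix.nonsing_inv_mul S hSdet
  have hkey : S⁻¹ * (Fᵀ * Q * F) = 1 - S⁻¹ * R := by
    have h : Fᵀ * Q * F = S - R := by rw [hSdef]; abel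
    rw [h, Matrix.mul_sub, hSinv]
  have h3 : Q * F * S⁻¹ * Fᵀ * Q * (F * R⁻¹ * Fᵀ * Q)
      = Q * (F * R⁻¹ * Fᵀ * Q) - Q * F * S⁻¹ * Fᵀ * Q := by
    have expand : Q * F * S⁻¹ * Fᵀ * Q * (F * R⁻¹ * Fᵀ * Q)
        = Q * F * (S⁻¹ * (Fᵀ * Q * F)) * (R⁻¹ * Fᵀ * Q) := by
      simp only [Matrix.mul_assoc]
    rw [expand, hkey, Matrix.mul_sub, Matrix.mul_one, Matrix.sub_mul]
    congr 1
    · simp only [Matrix.mul_assoc]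
    · have h4 : Q * F * (S⁻¹ * R) * (R⁻¹ * Fᵀ * Q) = Q * F * S⁻¹ * (R * R⁻¹) * (Fᵀ * Q) := by
        simp only [Matrix.mul_assoc]
      rw [h4, hRinv, Matrix.mul_one]
      simp only [Matrix.mul_assoc]
  have main : (Q * F * S⁻¹ * Fᵀ * Q + Q * T⁻¹) * T = Q * T := by
    rw [Matrix.add_mul, Matrix.mul_assoc Q T⁻¹ T, hTinv, Matrix.mul_one]
    rw [hTdef, Matrix.mul_add, Matrix.mul_add, Matrix.mul_one, Matrix.mul_one, h3]
    abel
  have h5 := congrArg (· * T⁻¹) main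
  simp only [Matrix.mul_assoc, Matrix.mul_nonsing_inv T hTdet, Matrix.mul_one] at h5
  simpa [Matrix.mul_assoc] using h5
end

section
/- Every achievable pair of closed-loop responses incurs at least the clairvoyant optimal cost: if Φx (of size (T+1)n×(T+1)n) and Φu (of size Tm×(T+1)n) satisfy the achievability constraint (I − 𝐙𝐀)Φx − 𝐙𝐁Φu = I, then Φxᵀ𝐐Φx + Φuᵀ𝐑Φu ⪰ 𝐂_T in the Loewner order; in particular, the regret J_T(Φuδ, δ) − δᵀ𝐂_Tδ of any achievable closed-loop system is nonnegative for every δ. -/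
/-!
Achievability forces `Φx = 𝐆 + 𝐅 Φu` (here the nilpotency of `𝐙𝐀` makes `𝐆` exist), so the
cost matrix is a quadratic function of `Φu`. Completing the square with `𝐏 = 𝐑 + 𝐅ᵀ𝐐𝐅` gives
`Φxᵀ𝐐Φx + Φuᵀ𝐑Φu = Kᵀ𝐏K + 𝐆ᵀ𝐐(I − 𝐅𝐏⁻¹𝐅ᵀ𝐐)𝐆` with `K = Φu + 𝐏⁻¹𝐅ᵀ𝐐𝐆`, and by the Woodbury
identity `(I + 𝐅𝐑⁻¹𝐅ᵀ𝐐)⁻¹ = I − 𝐅𝐏⁻¹𝐅ᵀ𝐐` the last term is exactly `𝐂_T`.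
-/

open Matrix

noncomputable section

/-- Index type for stacked state / disturbance trajectories over horizon `T`:
block index in `Fin (T+1)`, coordinate in `Fin n`. -/
abbrev SIdx (n T : ℕ) := Fin (T + 1) × Fin n

/-- Index type for stacked input trajectories over horizon `T`. -/
abbrev UIdx (m T : ℕ) := Fin T × Fin m

/-- The block-downshift operator `𝐙`. -/
def Zshift (n T : ℕ) : Matrix (SIdx n T) (SIdx n T) ℝ :=
  Matrix.of fun p q => if (p.1 : ℕ) = (q.1 : ℕ) + 1 ∧ p.2 = q.2 then (1 : ℝ) else 0

/-- `𝐀 = I_{T+1} ⊗ A`. -/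
def bigA (n T : ℕ) (A : Matrix (Fin n) (Fin n) ℝ) : Matrix (SIdx n T) (SIdx n T) ℝ :=
  Matrix.of fun p q => if p.1 = q.1 then A p.2 q.2 else 0

/-- `𝐁 = col(I_T ⊗ B, 0)`. -/
def bigB (n m T : ℕ) (B : Matrix (Fin n) (Fin m) ℝ) : Matrix (SIdx n T) (UIdx m T) ℝ :=
  Matrix.of fun p q => if (p.1 : ℕ) = (q.1 : ℕ) then B p.2 q.2 else 0

/-- `𝐐 = blkdiag(I_T ⊗ Q, 0)`. -/
def bigQ (n T : ℕ) (Q : Matrix (Fin n) (Fin n) ℝ) : Matrix (SIdx n T) (SIdx n T) ℝ :=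
  Matrix.of fun p q => if p.1 = q.1 ∧ (p.1 : ℕ) < T then Q p.2 q.2 else 0

/-- `𝐑 = I_T ⊗ R`. -/
def bigR (m T : ℕ) (R : Matrix (Fin m) (Fin m) ℝ) : Matrix (UIdx m T) (UIdx m T) ℝ :=
  Matrix.of fun p q => if p.1 = q.1 then R p.2 q.2 else 0

/-- `𝐅 = (I − 𝐙𝐀)⁻¹𝐙𝐁`. -/
def bigF (n m T : ℕ) (A : Matrix (Fin n) (Fin n) ℝ) (B : Matrix (Fin n) (Fin m) ℝ) :
    Matrix (SIdx n T) (UIdx m T) ℝ :=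
  (1 - Zshift n T * bigA n T A)⁻¹ * (Zshift n T * bigB n m T B)

/-- `𝐆 = (I − 𝐙𝐀)⁻¹`. -/
def bigG (n T : ℕ) (A : Matrix (Fin n) (Fin n) ℝ) : Matrix (SIdx n T) (SIdx n T) ℝ :=
  (1 - Zshift n T * bigA n T A)⁻¹

/-- The control cost `J_T(u, δ) = xᵀ𝐐x + uᵀ𝐑u` with `x = 𝐅u + 𝐆δ`. -/
def costJ (n m T : ℕ) (A : Matrix (Fin n) (Fin n) ℝ) (B : Matrix (Fin n) (Fin m) ℝ)
    (Q : Matrix (Fin n) (Fin n) ℝ) (R : Matrix (Fin m) (Fin m) ℝ)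
    (u : UIdx m T → ℝ) (δ : SIdx n T → ℝ) : ℝ :=
  let x := bigF n m T A B *ᵥ u + bigG n T A *ᵥ δ
  x ⬝ᵥ (bigQ n T Q *ᵥ x) + u ⬝ᵥ (bigR m T R *ᵥ u)

/-- `𝐏 = 𝐑 + 𝐅ᵀ𝐐𝐅`. -/
def bigP (n m T : ℕ) (A : Matrix (Fin n) (Fin n) ℝ) (B : Matrix (Fin n) (Fin m) ℝ)
    (Q : Matrix (Fin n) (Fin n) ℝ) (R : Matrix (Fin m) (Fin m) ℝ) :
    Matrix (UIdx m T) (UIdx m T) ℝ :=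
  bigR m T R + (bigF n m T A B)ᵀ * bigQ n T Q * bigF n m T A B

/-- The clairvoyant cost matrix `𝐂_T = 𝐆ᵀ𝐐(I + 𝐅𝐑⁻¹𝐅ᵀ𝐐)⁻¹𝐆`. -/
def Cmat (n m T : ℕ) (A : Matrix (Fin n) (Fin n) ℝ) (B : Matrix (Fin n) (Fin m) ℝ)
    (Q : Matrix (Fin n) (Fin n) ℝ) (R : Matrix (Fin m) (Fin m) ℝ) :
    Matrix (SIdx n T) (SIdx n T) ℝ :=
  (bigG n T A)ᵀ * bigQ n T Q *
    (1 + bigF n m T A B * (bigR m T R)⁻¹ * (bigF n m T A B)ᵀ * bigQ n T Q)⁻¹ * bigG n T A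

/-- Assemble `δ = col(x₀, w₀, …, w_{T−1})`. -/
def assemble (n T : ℕ) (x0 : Fin n → ℝ) (w : Fin T × Fin n → ℝ) : SIdx n T → ℝ :=
  fun p => if h : (p.1 : ℕ) = 0 then x0 p.2
    else w (⟨(p.1 : ℕ) - 1, by have := p.1.isLt; omega⟩, p.2)


namespace Matrix

variable {ι : Type*} [Fintype ι] [DecidableEq ι] {R : Type*} [Semiring R]

lemma pow_apply_eq_zero_of_lt_add {M : Matrix ι ι R} (deg : ι → ℕ)
    (hM : ∀ i j, deg i ≤ deg j → M i j = 0) :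
    ∀ (k : ℕ) (i j : ι), deg i < deg j + k → (M ^ k) i j = 0 := by
  intro k
  induction k with
  | zero =>
    intro i j hij
    rw [pow_zero, one_apply_ne]
    rintro rfl
    omega
  | succ k ih =>
    intro i j hij
    rw [pow_succ, mul_apply]
    refine Finset.sum_eq_zero fun r _ => ?_
    by_cases hr : deg r ≤ deg j
    · rw [hM r j hr, mul_zero]
    · rw [ih i r (by omega), zero_mul]

lemma isNilpotent_of_apply_eq_zero_of_le {M : Matrix ι ι R} (deg : ι → ℕ) (N : ℕ)
    (hdeg : ∀ i, deg i < N) (hM : ∀ i j, deg i ≤ deg j → M i j = 0) : IsNilpotent M :=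
  ⟨N, ext fun i j => pow_apply_eq_zero_of_lt_add deg hM N i j (by have := hdeg i; omega)⟩

end Matrix

section ClosedLoopAlgebra

variable {ι κ ν α : Type*} [Fintype ι] [Fintype κ] [DecidableEq ι] [DecidableEq κ] [CommRing α]

lemma inv_one_add_mul_inv_mul_eq_sub (F : Matrix ι κ α) (R : Matrix κ κ α) (V : Matrix κ ι α)
    (hR : IsUnit R) (hP : IsUnit (R + V * F)) :
    (1 + F * R⁻¹ * V)⁻¹ = 1 - F * (R + V * F)⁻¹ * V := by
  have hRR : R⁻¹⁻¹ = R := nonsing_inv_nonsing_inv _ ((isUnit_iff_isUnit_det R).mp hR)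
  rw [add_mul_mul_inv_eq_sub 1 F R⁻¹ V isUnit_one (isUnit_nonsing_inv_iff.mpr hR)
    (by rwa [hRR, inv_one, Matrix.mul_one])]
  simp only [hRR, inv_one, Matrix.mul_one, Matrix.one_mul]

lemma cost_complete_square (G : Matrix ι ν α) (F : Matrix ι κ α) (Φ : Matrix κ ν α)
    (Q : Matrix ι ι α) (R : Matrix κ κ α) (hQ : Qᵀ = Q) (hR : Rᵀ = R)
    (hP : IsUnit (R + Fᵀ * Q * F)) :
    (G + F * Φ)ᵀ * Q * (G + F * Φ) + Φᵀ * R * Φ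
      = (Φ + (R + Fᵀ * Q * F)⁻¹ * (Fᵀ * Q * G))ᵀ * (R + Fᵀ * Q * F)
          * (Φ + (R + Fᵀ * Q * F)⁻¹ * (Fᵀ * Q * G))
        + Gᵀ * Q * (1 - F * (R + Fᵀ * Q * F)⁻¹ * (Fᵀ * Q)) * G := by
  set P := R + Fᵀ * Q * F with hPdef
  have hPdet : IsUnit P.det := (isUnit_iff_isUnit_det P).mp hP
  have hPinvT : P⁻¹ᵀ = P⁻¹ := by
    rw [transpose_nonsing_inv, hPdef, transpose_add, transpose_mul, transpose_mul,
      transpose_transpose, hQ, hR, Matrix.mul_assoc]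
  have hFQF : ∀ Y : Matrix κ ν α, Fᵀ * (Q * (F * Y)) = P * Y - R * Y := fun Y => by
    rw [hPdef, Matrix.add_mul, Matrix.mul_assoc, Matrix.mul_assoc]; abel
  have hPPinv : ∀ Y : Matrix κ ν α, P * (P⁻¹ * Y) = Y := fun Y => by
    rw [← Matrix.mul_assoc, mul_nonsing_inv _ hPdet, Matrix.one_mul]
  have hPinvP : ∀ Y : Matrix κ ν α, P⁻¹ * (P * Y) = Y := fun Y => by
    rw [← Matrix.mul_assoc, nonsing_inv_mul _ hPdet, Matrix.one_mul]
  simp only [transpose_add, transpose_mul, transpose_transpose, hQ, hPinvT, Matrix.add_mul,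
    Matrix.mul_add, Matrix.mul_sub, Matrix.sub_mul, Matrix.mul_one, Matrix.mul_assoc, hFQF,
    hPPinv, hPinvP]
  abel

end ClosedLoopAlgebra

section FiniteHorizon

open scoped Kronecker

variable {n m T : ℕ} (A : Matrix (Fin n) (Fin n) ℝ) (B : Matrix (Fin n) (Fin m) ℝ)
  {Q : Matrix (Fin n) (Fin n) ℝ} {R : Matrix (Fin m) (Fin m) ℝ}

lemma Zshift_mul_bigA_apply_eq_zero (p q : SIdx n T) (hpq : (p.1 : ℕ) ≤ q.1) :
    (Zshift n T * bigA n T A) p q = 0 := by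
  refine Finset.sum_eq_zero fun r _ => ?_
  simp only [Zshift, bigA, of_apply]
  split_ifs with h₁ h₂
  · exact absurd (congrArg Fin.val h₂) (by omega)
  all_goals simp

lemma isUnit_one_sub_Zshift_mul_bigA : IsUnit (1 - Zshift n T * bigA n T A) :=
  (isNilpotent_of_apply_eq_zero_of_le (fun p : SIdx n T => (p.1 : ℕ)) (T + 1)
    (fun p => p.1.isLt) (Zshift_mul_bigA_apply_eq_zero A)).isUnit_one_sub

lemma eq_bigG_add_bigF_mul_of_achievable {Φx : Matrix (SIdx n T) (SIdx n T) ℝ}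
    {Φu : Matrix (UIdx m T) (SIdx n T) ℝ}
    (hach : (1 - Zshift n T * bigA n T A) * Φx - Zshift n T * bigB n m T B * Φu = 1) :
    Φx = bigG n T A + bigF n m T A B * Φu := by
  have hG : bigG n T A * (1 - Zshift n T * bigA n T A) = 1 :=
    nonsing_inv_mul _ ((isUnit_iff_isUnit_det _).mp (isUnit_one_sub_Zshift_mul_bigA A))
  calc Φx = bigG n T A * ((1 - Zshift n T * bigA n T A) * Φx) := by
        rw [← Matrix.mul_assoc, hG, Matrix.one_mul]
    _ = bigG n T A * (1 + Zshift n T * bigB n m T B * Φu) := by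
        rw [← sub_eq_iff_eq_add.mp hach]
    _ = bigG n T A + bigF n m T A B * Φu := by
        rw [Matrix.mul_add, Matrix.mul_one, ← Matrix.mul_assoc, bigF, bigG]

lemma bigQ_eq_kronecker (Q : Matrix (Fin n) (Fin n) ℝ) :
    bigQ n T Q = diagonal (fun t : Fin (T + 1) => if (t : ℕ) < T then 1 else 0) ⊗ₖ Q := by
  ext p q
  simp only [bigQ, of_apply, kroneckerMap_apply, diagonal_apply]
  by_cases h : p.1 = q.1 <;> simp [h]

lemma bigR_eq_kronecker (R : Matrix (Fin m) (Fin m) ℝ) :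
    bigR m T R = (1 : Matrix (Fin T) (Fin T) ℝ) ⊗ₖ R := by
  ext p q
  simp only [bigR, of_apply, kroneckerMap_apply, one_apply]
  split_ifs <;> simp

lemma bigQ_posSemidef (hQ : Q.PosSemidef) : (bigQ n T Q).PosSemidef := by
  rw [bigQ_eq_kronecker]
  refine (PosSemidef.diagonal fun t => ?_).kronecker hQ
  dsimp only
  split_ifs <;> norm_num

lemma bigR_posDef (hR : R.PosDef) : (bigR m T R).PosDef := by
  rw [bigR_eq_kronecker]
  exact PosDef.one.kronecker hR

lemma bigP_posDef (hQ : Q.PosSemidef) (hR : R.PosDef) : (bigP n m T A B Q R).PosDef := by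
  refine (bigR_posDef hR).add_posSemidef ?_
  simpa only [conjTranspose_eq_transpose_of_trivial] using
    (bigQ_posSemidef hQ).conjTranspose_mul_mul_same (bigF n m T A B)

lemma Cmat_eq (hQ : Q.PosSemidef) (hR : R.PosDef) :
    Cmat n m T A B Q R = (bigG n T A)ᵀ * bigQ n T Q
      * (1 - bigF n m T A B * (bigP n m T A B Q R)⁻¹ * ((bigF n m T A B)ᵀ * bigQ n T Q))
      * bigG n T A := by
  rw [Cmat, Matrix.mul_assoc (bigF n m T A B * _), inv_one_add_mul_inv_mul_eq_sub _ _ _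
    (bigR_posDef hR).isUnit (bigP_posDef A B hQ hR).isUnit,
    bigP, Matrix.mul_assoc _ (bigQ n T Q)]

lemma costJ_mulVec (Φu : Matrix (UIdx m T) (SIdx n T) ℝ) (δ : SIdx n T → ℝ) :
    costJ n m T A B Q R (Φu *ᵥ δ) δ = δ ⬝ᵥ
      (((bigG n T A + bigF n m T A B * Φu)ᵀ * bigQ n T Q * (bigG n T A + bigF n m T A B * Φu)
        + Φuᵀ * bigR m T R * Φu) *ᵥ δ) := by
  have hquad : ∀ {κ : Type} [Fintype κ] (K : Matrix κ (SIdx n T) ℝ) (M : Matrix κ κ ℝ),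
      δ ⬝ᵥ ((Kᵀ * M * K) *ᵥ δ) = (K *ᵥ δ) ⬝ᵥ (M *ᵥ (K *ᵥ δ)) := fun K M => by
    rw [← mulVec_mulVec, ← mulVec_mulVec, dotProduct_mulVec, vecMul_transpose]
  rw [add_mulVec, dotProduct_add, hquad, hquad, costJ, add_mulVec, ← mulVec_mulVec,
    add_comm (bigG n T A *ᵥ δ)]

end FiniteHorizon

theorem stmt4_general (n m T : ℕ)
    (A : Matrix (Fin n) (Fin n) ℝ) (B : Matrix (Fin n) (Fin m) ℝ)
    (Q : Matrix (Fin n) (Fin n) ℝ) (R : Matrix (Fin m) (Fin m) ℝ)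
    (hQ : Q.PosSemidef) (hR : R.PosDef)
    (Φx : Matrix (SIdx n T) (SIdx n T) ℝ) (Φu : Matrix (UIdx m T) (SIdx n T) ℝ)
    (hach : (1 - Zshift n T * bigA n T A) * Φx - Zshift n T * bigB n m T B * Φu = 1) :
    (Φxᵀ * bigQ n T Q * Φx + Φuᵀ * bigR m T R * Φu - Cmat n m T A B Q R).PosSemidef ∧
    ∀ δ : SIdx n T → ℝ,
      0 ≤ costJ n m T A B Q R (Φu *ᵥ δ) δ - δ ⬝ᵥ (Cmat n m T A B Q R *ᵥ δ) := by
  have hΦ := eq_bigG_add_bigF_mul_of_achievable A B hach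
  have hP := bigP_posDef (T := T) A B hQ hR
  set K := Φu + (bigP n m T A B Q R)⁻¹ * ((bigF n m T A B)ᵀ * bigQ n T Q * bigG n T A)
  have hsquare : Φxᵀ * bigQ n T Q * Φx + Φuᵀ * bigR m T R * Φu - Cmat n m T A B Q R
      = Kᵀ * bigP n m T A B Q R * K := by
    rw [hΦ, cost_complete_square _ _ _ _ _ (isHermitian_iff_isSymm.mp (bigQ_posSemidef hQ).1).eq
      (isHermitian_iff_isSymm.mp (bigR_posDef hR).1).eq hP.isUnit, ← bigP, Cmat_eq A B hQ hR,
      add_sub_cancel_right]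
  have hpsd : (Φxᵀ * bigQ n T Q * Φx + Φuᵀ * bigR m T R * Φu - Cmat n m T A B Q R).PosSemidef := by
    rw [hsquare, ← conjTranspose_eq_transpose_of_trivial]
    exact hP.posSemidef.conjTranspose_mul_mul_same K
  refine ⟨hpsd, fun δ => ?_⟩
  rw [costJ_mulVec, ← hΦ, ← dotProduct_sub, ← sub_mulVec]
  simpa only [star_trivial] using hpsd.dotProduct_mulVec_nonneg δ

/-- Every achievable pair of closed-loop responses incurs at least the clairvoyant optimal
cost: `Φxᵀ𝐐Φx + Φuᵀ𝐑Φu ⪰ 𝐂_T`, and the regret of any achievable closed-loop system is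
nonnegative for every disturbance `δ`. -/
theorem stmt4 (n m T : ℕ) (hn : 0 < n) (hm : 0 < m) (hT : 1 ≤ T)
    (A : Matrix (Fin n) (Fin n) ℝ) (B : Matrix (Fin n) (Fin m) ℝ)
    (Q : Matrix (Fin n) (Fin n) ℝ) (R : Matrix (Fin m) (Fin m) ℝ)
    (hQ : Q.PosSemidef) (hR : R.PosDef)
    (Φx : Matrix (SIdx n T) (SIdx n T) ℝ) (Φu : Matrix (UIdx m T) (SIdx n T) ℝ)
    (hach : (1 - Zshift n T * bigA n T A) * Φx - Zshift n T * bigB n m T B * Φu = 1) :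
    (Φxᵀ * bigQ n T Q * Φx + Φuᵀ * bigR m T R * Φu - Cmat n m T A B Q R).PosSemidef ∧
    ∀ δ : SIdx n T → ℝ,
      0 ≤ costJ n m T A B Q R (Φu *ᵥ δ) δ - δ ⬝ᵥ (Cmat n m T A B Q R *ᵥ δ) :=
  stmt4_general n m T A B Q R hQ hR Φx Φu hach

end
end

section
/- The trailing principal block submatrix of the clairvoyant cost matrix over horizon T+1 is dominated by the clairvoyant cost matrix over horizon T: 𝐂_{T+1}^{[1:T+1, 1:T+1]} ⪯ 𝐂_T. (Lemma 2, left inequality.) -/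
open Matrix

noncomputable section

/-!
By the Woodbury identity `𝐂_T = 𝐆ᵀ(𝐐 − 𝐐𝐅𝐏⁻¹𝐅ᵀ𝐐)𝐆` with `𝐏 = 𝐑 + 𝐅ᵀ𝐐𝐅`, so completing the
square in `u` shows that `δᵀ 𝐂_T δ` is the minimum over input sequences `u` of the cost `J_T(u, δ)`,
and the minimum is attained. Prepending a zero block at time `0` to `u` and to `δ` turns the horizon-`T` system into
the horizon-`(T+1)` system with zero initial state, along which state and cost are unchanged. Hence
`δᵀ 𝐂_{T+1}^{[1:T+1, 1:T+1]} δ` is at most the horizon-`T` optimum `δᵀ 𝐂_T δ`.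
-/

namespace Matrix

lemma dotProduct_mulVec_comm_of_isSymm {ι : Type*} [Fintype ι] {M : Matrix ι ι ℝ}
    (hM : M.IsSymm) (v w : ι → ℝ) : v ⬝ᵥ (M *ᵥ w) = w ⬝ᵥ (M *ᵥ v) := by
  rw [← dotProduct_transpose_mulVec, hM.eq]

lemma dotProduct_transpose_mul_mul_mulVec {ι κ : Type*} [Fintype ι] [Fintype κ]
    (E : Matrix ι κ ℝ) (M : Matrix ι ι ℝ) (v : κ → ℝ) :
    v ⬝ᵥ ((Eᵀ * M * E) *ᵥ v) = (E *ᵥ v) ⬝ᵥ (M *ᵥ (E *ᵥ v)) := by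
  rw [← mulVec_mulVec, ← mulVec_mulVec, dotProduct_transpose_mulVec, dotProduct_comm]

lemma nonsing_inv_mul_eq_mul_nonsing_inv {α β R : Type*} [Fintype α] [DecidableEq α]
    [Fintype β] [DecidableEq β] [CommRing R] {M' : Matrix α α R} {M : Matrix β β R}
    {E : Matrix α β R} (hM' : IsUnit M') (hM : IsUnit M) (h : M' * E = E * M) :
    M'⁻¹ * E = E * M⁻¹ := by
  calc M'⁻¹ * E = M'⁻¹ * (E * M) * M⁻¹ := by
        rw [Matrix.mul_assoc, Matrix.mul_assoc, mul_nonsing_inv _ ((isUnit_iff_isUnit_det M).mp hM),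
          Matrix.mul_one]
    _ = E * M⁻¹ := by
        rw [← h, ← Matrix.mul_assoc, nonsing_inv_mul _ ((isUnit_iff_isUnit_det M').mp hM'),
          Matrix.one_mul]

lemma pow_eq_zero_of_apply_eq_zero_of_le {α R : Type*} [Fintype α] [DecidableEq α]
    [Semiring R] {N : Matrix α α R} {k : ℕ} (b : α → ℕ) (hb : ∀ i, b i < k)
    (hN : ∀ i j, b i ≤ b j → N i j = 0) : N ^ k = 0 := by
  have key : ∀ l i j, b i < b j + l → (N ^ l) i j = 0 := by
    intro l
    induction l with
    | zero => exact fun i j h => one_apply_ne fun hij => by subst hij; omega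
    | succ l ih =>
      intro i j h
      rw [pow_succ, mul_apply]
      refine Finset.sum_eq_zero fun r _ => ?_
      by_cases hr : b r ≤ b j
      · rw [hN r j hr, mul_zero]
      · rw [ih i r (by omega), zero_mul]
  ext i j
  exact key k i j (by have := hb i; omega)

end Matrix

section LQ

variable {ι κ : Type*} [Fintype ι] [Fintype κ] [DecidableEq κ]

def lqCost (F : Matrix ι κ ℝ) (Q : Matrix ι ι ℝ) (R : Matrix κ κ ℝ) (u : κ → ℝ) (x : ι → ℝ) : ℝ :=
  (F *ᵥ u + x) ⬝ᵥ (Q *ᵥ (F *ᵥ u + x)) + u ⬝ᵥ (R *ᵥ u)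

def lqValue (F : Matrix ι κ ℝ) (Q : Matrix ι ι ℝ) (R : Matrix κ κ ℝ) : Matrix ι ι ℝ :=
  Q - Q * F * (R + Fᵀ * Q * F)⁻¹ * Fᵀ * Q

lemma lqCost_eq_lqValue_add {F : Matrix ι κ ℝ} {Q : Matrix ι ι ℝ} {R : Matrix κ κ ℝ}
    (hQ : Q.IsSymm) (hP : (R + Fᵀ * Q * F).PosDef) (u : κ → ℝ) (x : ι → ℝ) :
    lqCost F Q R u x = x ⬝ᵥ (lqValue F Q R *ᵥ x) +
      (u + (R + Fᵀ * Q * F)⁻¹ *ᵥ (Fᵀ *ᵥ (Q *ᵥ x))) ⬝ᵥ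
        ((R + Fᵀ * Q * F) *ᵥ (u + (R + Fᵀ * Q * F)⁻¹ *ᵥ (Fᵀ *ᵥ (Q *ᵥ x)))) := by
  set P := R + Fᵀ * Q * F with hPdef
  set k := Fᵀ *ᵥ (Q *ᵥ x)
  set y := P⁻¹ *ᵥ k
  have hPy : P *ᵥ y = k := by
    rw [mulVec_mulVec, mul_nonsing_inv _ ((isUnit_iff_isUnit_det P).mp hP.isUnit), one_mulVec]
  have hcross : ∀ v, x ⬝ᵥ (Q *ᵥ (F *ᵥ v)) = v ⬝ᵥ k := fun v => by
    rw [dotProduct_mulVec_comm_of_isSymm hQ, dotProduct_comm, ← dotProduct_transpose_mulVec]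
  have hPu : y ⬝ᵥ (P *ᵥ u) = u ⬝ᵥ k := by
    rw [dotProduct_mulVec_comm_of_isSymm (isHermitian_iff_isSymm.mp hP.1), hPy]
  have hFQF : u ⬝ᵥ (P *ᵥ u) = u ⬝ᵥ (R *ᵥ u) + (F *ᵥ u) ⬝ᵥ (Q *ᵥ (F *ᵥ u)) := by
    rw [hPdef, add_mulVec, dotProduct_add, ← mulVec_mulVec, ← mulVec_mulVec,
      dotProduct_transpose_mulVec, dotProduct_comm (Q *ᵥ (F *ᵥ u))]
  have hValue : x ⬝ᵥ (lqValue F Q R *ᵥ x) = x ⬝ᵥ (Q *ᵥ x) - y ⬝ᵥ k := by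
    simp only [lqValue, sub_mulVec, dotProduct_sub, ← mulVec_mulVec]
    rw [hcross]
  rw [lqCost, hValue]
  simp only [mulVec_add, dotProduct_add, add_dotProduct]
  rw [hPy, hPu, hFQF, hcross, dotProduct_mulVec_comm_of_isSymm hQ (F *ᵥ u) x, hcross,
    dotProduct_comm y k]
  ring

omit [DecidableEq κ] in
lemma posDef_add_transpose_mul_mul {F : Matrix ι κ ℝ} {Q : Matrix ι ι ℝ} {R : Matrix κ κ ℝ}
    (hQ : Q.PosSemidef) (hR : R.PosDef) : (R + Fᵀ * Q * F).PosDef := by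
  refine hR.add_posSemidef ?_
  simpa [conjTranspose_eq_transpose_of_trivial] using hQ.conjTranspose_mul_mul_same F

lemma mul_inv_one_add_eq_lqValue [DecidableEq ι] {F : Matrix ι κ ℝ} {Q : Matrix ι ι ℝ}
    {R : Matrix κ κ ℝ} (hR : IsUnit R) (hP : IsUnit (R + Fᵀ * Q * F)) :
    Q * (1 + F * R⁻¹ * Fᵀ * Q)⁻¹ = lqValue F Q R := by
  have hRdet := (isUnit_iff_isUnit_det R).mp hR
  have hP' : IsUnit ((R⁻¹)⁻¹ + Fᵀ * Q * (1 : Matrix ι ι ℝ)⁻¹ * F) := by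
    rwa [nonsing_inv_nonsing_inv R hRdet, inv_one, Matrix.mul_one]
  rw [Matrix.mul_assoc (F * R⁻¹), add_mul_mul_inv_eq_sub 1 F R⁻¹ (Fᵀ * Q) isUnit_one
      ((isUnit_iff_isUnit_det _).mpr (isUnit_nonsing_inv_det R hRdet)) hP',
    nonsing_inv_nonsing_inv R hRdet]
  simp only [inv_one, Matrix.mul_one, Matrix.one_mul, Matrix.mul_sub, lqValue, Matrix.mul_assoc]

lemma lqValue_isSymm {F : Matrix ι κ ℝ} {Q : Matrix ι ι ℝ} {R : Matrix κ κ ℝ}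
    (hQ : Q.IsSymm) (hP : (R + Fᵀ * Q * F).IsSymm) : (lqValue F Q R).IsSymm := by
  simp only [IsSymm, lqValue, transpose_sub, transpose_mul, transpose_nonsing_inv, hP.eq, hQ.eq,
    transpose_transpose]
  simp only [Matrix.mul_assoc]

lemma dotProduct_lqValue_mulVec_le_lqCost {F : Matrix ι κ ℝ} {Q : Matrix ι ι ℝ}
    {R : Matrix κ κ ℝ} (hQ : Q.IsSymm) (hP : (R + Fᵀ * Q * F).PosDef) (u : κ → ℝ) (x : ι → ℝ) :
    x ⬝ᵥ (lqValue F Q R *ᵥ x) ≤ lqCost F Q R u x := by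
  rw [lqCost_eq_lqValue_add hQ hP]
  simpa using hP.posSemidef.dotProduct_mulVec_nonneg (u + (R + Fᵀ * Q * F)⁻¹ *ᵥ (Fᵀ *ᵥ (Q *ᵥ x)))

lemma lqCost_optimal_eq {F : Matrix ι κ ℝ} {Q : Matrix ι ι ℝ} {R : Matrix κ κ ℝ}
    (hQ : Q.IsSymm) (hP : (R + Fᵀ * Q * F).PosDef) (x : ι → ℝ) :
    lqCost F Q R (-((R + Fᵀ * Q * F)⁻¹ *ᵥ (Fᵀ *ᵥ (Q *ᵥ x)))) x = x ⬝ᵥ (lqValue F Q R *ᵥ x) := by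
  rw [lqCost_eq_lqValue_add hQ hP, neg_add_cancel, zero_dotProduct, add_zero]

end LQ

section Shift

-- `blockShift k d *ᵥ v` prepends a zero block to `v`.
def blockShift (k d : ℕ) : Matrix (Fin (k + 1) × Fin d) (Fin k × Fin d) ℝ :=
  (1 : Matrix (Fin (k + 1) × Fin d) (Fin (k + 1) × Fin d) ℝ).submatrix id fun p => (p.1.succ, p.2)

lemma mul_blockShift {ι : Type*} {l e : ℕ} (M : Matrix ι (Fin (l + 1) × Fin e) ℝ) :
    M * blockShift l e = M.submatrix id fun p => (p.1.succ, p.2) :=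
  mul_submatrix_one (Equiv.refl _) _ M

lemma blockShift_transpose_mul {ι : Type*} {k d : ℕ} (M : Matrix (Fin (k + 1) × Fin d) ι ℝ) :
    (blockShift k d)ᵀ * M = M.submatrix (fun p => (p.1.succ, p.2)) id := by
  rw [blockShift, transpose_submatrix, transpose_one]
  exact one_submatrix_mul _ (Equiv.refl _) M

lemma blockShift_transpose_mul_self (k d : ℕ) : (blockShift k d)ᵀ * blockShift k d = 1 := by
  rw [blockShift_transpose_mul, blockShift, submatrix_submatrix]
  exact submatrix_one _ fun p q h => by simpa [Prod.ext_iff] using h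

lemma mul_blockShift_eq_blockShift_mul {k l d e : ℕ}
    {M' : Matrix (Fin (k + 1) × Fin d) (Fin (l + 1) × Fin e) ℝ}
    {M : Matrix (Fin k × Fin d) (Fin l × Fin e) ℝ}
    (h_zero : ∀ a (j : Fin l) b, M' (0, a) (j.succ, b) = 0)
    (h_succ : ∀ i a j b, M' (i.succ, a) (j.succ, b) = M (i, a) (j, b)) :
    M' * blockShift l e = blockShift k d * M := by
  ext ⟨i, a⟩ ⟨j, b⟩
  rw [mul_blockShift, submatrix_apply, blockShift, mul_apply]
  cases i using Fin.cases with
  | zero => simp [h_zero, one_apply, (Fin.succ_ne_zero _).symm]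
  | succ i => simp [h_succ, one_apply, Fintype.sum_prod_type, ite_and]

lemma dotProduct_submatrix_succ_mulVec {k d : ℕ}
    (M : Matrix (Fin (k + 1) × Fin d) (Fin (k + 1) × Fin d) ℝ) (v : Fin k × Fin d → ℝ) :
    v ⬝ᵥ (M.submatrix (fun p => (p.1.succ, p.2)) (fun p => (p.1.succ, p.2)) *ᵥ v) =
      (blockShift k d *ᵥ v) ⬝ᵥ (M *ᵥ (blockShift k d *ᵥ v)) := by
  rw [← dotProduct_transpose_mul_mul_mulVec, mul_blockShift, blockShift_transpose_mul,
    submatrix_submatrix]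
  rfl

lemma blockShift_mulVec_dotProduct {k d : ℕ} (v w : Fin k × Fin d → ℝ) :
    (blockShift k d *ᵥ v) ⬝ᵥ (blockShift k d *ᵥ w) = v ⬝ᵥ w := by
  rw [← dotProduct_transpose_mulVec, dotProduct_comm, mulVec_mulVec,
    blockShift_transpose_mul_self, one_mulVec]

lemma blockShift_mulVec_dotProduct_mulVec {k d : ℕ}
    {M' : Matrix (Fin (k + 1) × Fin d) (Fin (k + 1) × Fin d) ℝ}
    {M : Matrix (Fin k × Fin d) (Fin k × Fin d) ℝ} (h : M' * blockShift k d = blockShift k d * M)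
    (v : Fin k × Fin d → ℝ) :
    (blockShift k d *ᵥ v) ⬝ᵥ (M' *ᵥ (blockShift k d *ᵥ v)) = v ⬝ᵥ (M *ᵥ v) := by
  rw [mulVec_mulVec, h, ← mulVec_mulVec, blockShift_mulVec_dotProduct]

end Shift

section Horizon

open scoped Kronecker

variable {n m T : ℕ} (A : Matrix (Fin n) (Fin n) ℝ) (B : Matrix (Fin n) (Fin m) ℝ)
  {Q : Matrix (Fin n) (Fin n) ℝ} {R : Matrix (Fin m) (Fin m) ℝ}

lemma Cmat_eq_transpose_mul_lqValue_mul (hQ : Q.PosSemidef) (hR : R.PosDef) :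
    Cmat n m T A B Q R =
      (bigG n T A)ᵀ * lqValue (bigF n m T A B) (bigQ n T Q) (bigR m T R) * bigG n T A := by
  rw [Cmat, Matrix.mul_assoc (bigG n T A)ᵀ,
    mul_inv_one_add_eq_lqValue (bigR_posDef hR).isUnit (bigP_posDef A B hQ hR).isUnit]

lemma Cmat_isHermitian (hQ : Q.PosSemidef) (hR : R.PosDef) :
    (Cmat n m T A B Q R).IsHermitian := by
  have hS := lqValue_isSymm (isHermitian_iff_isSymm.mp (bigQ_posSemidef (T := T) hQ).1)
    (isHermitian_iff_isSymm.mp (bigP_posDef A B hQ hR).1)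
  rw [isHermitian_iff_isSymm, Cmat_eq_transpose_mul_lqValue_mul A B hQ hR, IsSymm]
  simp only [transpose_mul, transpose_transpose, hS.eq, Matrix.mul_assoc]

lemma dotProduct_Cmat_mulVec (hQ : Q.PosSemidef) (hR : R.PosDef) (δ : SIdx n T → ℝ) :
    δ ⬝ᵥ (Cmat n m T A B Q R *ᵥ δ) = (bigG n T A *ᵥ δ) ⬝ᵥ
      (lqValue (bigF n m T A B) (bigQ n T Q) (bigR m T R) *ᵥ (bigG n T A *ᵥ δ)) := by
  rw [Cmat_eq_transpose_mul_lqValue_mul A B hQ hR, dotProduct_transpose_mul_mul_mulVec]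

lemma dotProduct_Cmat_mulVec_le_costJ (hQ : Q.PosSemidef) (hR : R.PosDef)
    (u : UIdx m T → ℝ) (δ : SIdx n T → ℝ) :
    δ ⬝ᵥ (Cmat n m T A B Q R *ᵥ δ) ≤ costJ n m T A B Q R u δ := by
  rw [dotProduct_Cmat_mulVec A B hQ hR]
  exact dotProduct_lqValue_mulVec_le_lqCost
    (isHermitian_iff_isSymm.mp (bigQ_posSemidef hQ).1) (bigP_posDef A B hQ hR) u _

lemma exists_costJ_eq_dotProduct_Cmat_mulVec (hQ : Q.PosSemidef) (hR : R.PosDef)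
    (δ : SIdx n T → ℝ) :
    ∃ u, costJ n m T A B Q R u δ = δ ⬝ᵥ (Cmat n m T A B Q R *ᵥ δ) := by
  rw [dotProduct_Cmat_mulVec A B hQ hR]
  exact ⟨_, lqCost_optimal_eq (isHermitian_iff_isSymm.mp (bigQ_posSemidef hQ).1)
    (bigP_posDef A B hQ hR) _⟩

lemma Zshift_mul_blockShift :
    Zshift n (T + 1) * blockShift (T + 1) n = blockShift (T + 1) n * Zshift n T :=
  mul_blockShift_eq_blockShift_mul (fun _ _ _ => by simp [Zshift])
    (fun _ _ _ _ => by simp [Zshift])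

lemma bigA_mul_blockShift :
    bigA n (T + 1) A * blockShift (T + 1) n = blockShift (T + 1) n * bigA n T A :=
  mul_blockShift_eq_blockShift_mul (fun _ _ _ => by simp [bigA, (Fin.succ_ne_zero _).symm])
    (fun _ _ _ _ => by simp [bigA])

lemma bigB_mul_blockShift :
    bigB n m (T + 1) B * blockShift T m = blockShift (T + 1) n * bigB n m T B :=
  mul_blockShift_eq_blockShift_mul (fun _ _ _ => by simp [bigB])
    (fun _ _ _ _ => by simp [bigB])

lemma bigQ_mul_blockShift :
    bigQ n (T + 1) Q * blockShift (T + 1) n = blockShift (T + 1) n * bigQ n T Q :=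
  mul_blockShift_eq_blockShift_mul (fun _ _ _ => by simp [bigQ, (Fin.succ_ne_zero _).symm])
    (fun _ _ _ _ => by simp [bigQ])

lemma bigR_mul_blockShift :
    bigR m (T + 1) R * blockShift T m = blockShift T m * bigR m T R :=
  mul_blockShift_eq_blockShift_mul (fun _ _ _ => by simp [bigR, (Fin.succ_ne_zero _).symm])
    (fun _ _ _ _ => by simp [bigR])

lemma bigG_mul_blockShift :
    bigG n (T + 1) A * blockShift (T + 1) n = blockShift (T + 1) n * bigG n T A := by
  refine nonsing_inv_mul_eq_mul_nonsing_inv (isUnit_one_sub_Zshift_mul_bigA A)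
    (isUnit_one_sub_Zshift_mul_bigA A) ?_
  rw [Matrix.sub_mul, Matrix.mul_sub, Matrix.one_mul, Matrix.mul_one, Matrix.mul_assoc,
    bigA_mul_blockShift, ← Matrix.mul_assoc, Zshift_mul_blockShift, Matrix.mul_assoc]

lemma bigF_mul_blockShift :
    bigF n m (T + 1) A B * blockShift T m = blockShift (T + 1) n * bigF n m T A B := by
  calc bigF n m (T + 1) A B * blockShift T m
      = bigG n (T + 1) A * (Zshift n (T + 1) * (bigB n m (T + 1) B * blockShift T m)) := by
        simp only [bigF, bigG, Matrix.mul_assoc]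
    _ = blockShift (T + 1) n * bigF n m T A B := by
        rw [bigB_mul_blockShift, ← Matrix.mul_assoc (Zshift n (T + 1)), Zshift_mul_blockShift,
          Matrix.mul_assoc, ← Matrix.mul_assoc (bigG n (T + 1) A), bigG_mul_blockShift,
          Matrix.mul_assoc]
        rfl

lemma costJ_blockShift (u : UIdx m T → ℝ) (δ : SIdx n T → ℝ) :
    costJ n m (T + 1) A B Q R (blockShift T m *ᵥ u) (blockShift (T + 1) n *ᵥ δ) =
      costJ n m T A B Q R u δ := by
  have hx : bigF n m (T + 1) A B *ᵥ (blockShift T m *ᵥ u) +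
      bigG n (T + 1) A *ᵥ (blockShift (T + 1) n *ᵥ δ) =
      blockShift (T + 1) n *ᵥ (bigF n m T A B *ᵥ u + bigG n T A *ᵥ δ) := by
    rw [mulVec_mulVec, mulVec_mulVec, bigF_mul_blockShift, bigG_mul_blockShift, mulVec_add,
      mulVec_mulVec, mulVec_mulVec]
  simp only [costJ]
  rw [hx, blockShift_mulVec_dotProduct_mulVec bigQ_mul_blockShift,
    blockShift_mulVec_dotProduct_mulVec bigR_mul_blockShift]

end Horizon

theorem stmt6_general (n m T : ℕ)
    (A : Matrix (Fin n) (Fin n) ℝ) (B : Matrix (Fin n) (Fin m) ℝ)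
    (Q : Matrix (Fin n) (Fin n) ℝ) (R : Matrix (Fin m) (Fin m) ℝ)
    (hQ : Q.PosSemidef) (hR : R.PosDef) :
    (Cmat n m T A B Q R -
      (Cmat n m (T + 1) A B Q R).submatrix
        (fun p : SIdx n T => ((p.1.succ : Fin (T + 2)), p.2))
        (fun p : SIdx n T => ((p.1.succ : Fin (T + 2)), p.2))).PosSemidef := by
  refine .of_dotProduct_mulVec_nonneg
    ((Cmat_isHermitian A B hQ hR).sub ((Cmat_isHermitian A B hQ hR).submatrix _)) fun v => ?_
  obtain ⟨u, hu⟩ := exists_costJ_eq_dotProduct_Cmat_mulVec A B hQ hR v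
  have hle := dotProduct_Cmat_mulVec_le_costJ A B hQ hR (blockShift T m *ᵥ u)
    (blockShift (T + 1) n *ᵥ v)
  rw [costJ_blockShift, hu, ← dotProduct_submatrix_succ_mulVec] at hle
  rwa [star_trivial, sub_mulVec, dotProduct_sub, sub_nonneg]

/-- Lemma 2, left inequality: the trailing principal block submatrix of `𝐂_{T+1}` is
dominated by `𝐂_T`, i.e. `𝐂_{T+1}^{[1:T+1, 1:T+1]} ⪯ 𝐂_T`. -/
theorem stmt6 (n m T : ℕ) (hn : 0 < n) (hm : 0 < m) (hT : 1 ≤ T)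
    (A : Matrix (Fin n) (Fin n) ℝ) (B : Matrix (Fin n) (Fin m) ℝ)
    (Q : Matrix (Fin n) (Fin n) ℝ) (R : Matrix (Fin m) (Fin m) ℝ)
    (hQ : Q.PosSemidef) (hR : R.PosDef) :
    (Cmat n m T A B Q R -
      (Cmat n m (T + 1) A B Q R).submatrix
        (fun p : SIdx n T => ((p.1.succ : Fin (T + 2)), p.2))
        (fun p : SIdx n T => ((p.1.succ : Fin (T + 2)), p.2))).PosSemidef :=
  stmt6_general n m T A B Q R hQ hR
end
end
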